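/- arXiv:math/0303226 — 6 statements merged into one kernel-verified Lean document; each statement's English description precedes it below -/
import Mathlib

section
/- Let π_l be a root of AH(X) = Σ_{i≥0} X^{p^i}/p^i with v_p(π_l) = 1/(p^l - p^{l-1}), l ≥ 2. Then there exists a unique root π_{l-1} of AH such that π_{l-1} ≡ π_l^p mod p·π_l; moreover v_p(π_{l-1}) = 1/(p^{l-1} - p^{l-2}). -/
set_option maxHeartbeats 1000000

open IsUltrametricDist Filter in
private lemma ah_norm_sub_le_max {K : Type*} [NormedField K] [IsUltrametricDist K] (x y : K) :
    ‖x - y‖ ≤ max ‖x‖ ‖y‖ := by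
  rw [sub_eq_add_neg]
  simpa using norm_add_le_max x (-y)

open IsUltrametricDist in
/-- Single Frobenius step estimate. -/
private lemma ah_step {K : Type*} [NormedField K] [IsUltrametricDist K]
    {p : ℕ} (hp : p.Prime)
    (hpK : ‖(p : K)‖ ≤ (p : ℝ)⁻¹) (hnat : ∀ n : ℕ, ‖(n : K)‖ ≤ 1)
    {ρ : ℝ} (a b : K) (ha : ‖a‖ ≤ ρ) (hb : ‖b‖ ≤ ρ) :
    ‖a ^ p - b ^ p‖ ≤ max ((p : ℝ)⁻¹ * (ρ ^ (p - 1) * ‖a - b‖)) (‖a - b‖ ^ p) := by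
  have hρ0 : 0 ≤ ρ := (norm_nonneg a).trans ha
  set δ := a - b with hδdef
  have hδρ : ‖δ‖ ≤ ρ := (ah_norm_sub_le_max a b).trans (max_le ha hb)
  have key : a ^ p - b ^ p = ∑ k ∈ Finset.range p, b ^ k * δ ^ (p - k) * (p.choose k : K) := by
    have h1 : a = b + δ := by rw [hδdef]; ring
    rw [h1, add_pow, Finset.sum_range_succ, Nat.choose_self, Nat.sub_self, pow_zero]
    push_cast
    ring
  rw [key]
  refine norm_sum_le_of_forall_le_of_nonneg ?_ ?_
  · exact le_max_of_le_right (pow_nonneg (norm_nonneg _) _)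
  intro k hk
  rw [Finset.mem_range] at hk
  rcases Nat.eq_zero_or_pos k with rfl | hk0
  · simp only [pow_zero, one_mul, Nat.choose_zero_right, Nat.cast_one, mul_one, Nat.sub_zero]
    exact le_max_of_le_right (le_of_eq (norm_pow _ _))
  · obtain ⟨c, hc⟩ := hp.dvd_choose_self hk0.ne' hk
    have hcK : ‖(p.choose k : K)‖ ≤ (p : ℝ)⁻¹ := by
      rw [hc]
      push_cast
      rw [norm_mul]
      calc ‖(p : K)‖ * ‖(c : K)‖ ≤ (p : ℝ)⁻¹ * 1 :=
            mul_le_mul hpK (hnat c) (norm_nonneg _) (by positivity)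
        _ = (p : ℝ)⁻¹ := mul_one _
    obtain ⟨j, hj⟩ : ∃ j, p - k = j + 1 := ⟨p - k - 1, by omega⟩
    have hkj : k + j = p - 1 := by omega
    refine le_max_of_le_left ?_
    calc ‖b ^ k * δ ^ (p - k) * (p.choose k : K)‖
        = ‖b‖ ^ k * (‖δ‖ ^ j * ‖δ‖) * ‖(p.choose k : K)‖ := by
          rw [norm_mul, norm_mul, norm_pow, norm_pow, hj, pow_succ]
      _ ≤ ρ ^ k * (ρ ^ j * ‖δ‖) * (p : ℝ)⁻¹ := by
          have h1 : ‖b‖ ^ k ≤ ρ ^ k := pow_le_pow_left₀ (norm_nonneg _) hb _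
          have h2 : ‖δ‖ ^ j ≤ ρ ^ j := pow_le_pow_left₀ (norm_nonneg _) hδρ _
          have h3 : ρ ^ k * (ρ ^ j * ‖δ‖) ≥ ‖b‖ ^ k * (‖δ‖ ^ j * ‖δ‖) := by
            refine mul_le_mul h1 (mul_le_mul_of_nonneg_right h2 (norm_nonneg _)) (by positivity) (by positivity)
          exact mul_le_mul h3 hcK (norm_nonneg _) (by positivity)
      _ = (p : ℝ)⁻¹ * (ρ ^ (p - 1) * ‖δ‖) := by rw [← hkj, pow_add]; ring

/-- Let `π_l` be a root of the Artin–Hasse series `AH(X) = ∑_{i≥0} X^{p^i}/p^i`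
with `v_p(π_l) = 1/(p^l - p^{l-1})`, `l ≥ 2`. Then there is a unique root
`π_{l-1}` of `AH` (in the open unit disk) with `π_{l-1} ≡ π_l^p mod p·π_l`
(i.e. `‖π_{l-1} - π_l^p‖ ≤ ‖p·π_l‖`); moreover it satisfies
`v_p(π_{l-1}) = 1/(p^{l-1} - p^{l-2})`. -/
theorem stmt_7 (p : ℕ) [Fact p.Prime] (l : ℕ) (hl : 2 ≤ l)
    {K : Type*} [NormedField K] [Algebra ℚ_[p] K] [IsAlgClosed K] [CompleteSpace K]
    [IsUltrametricDist K]
    (hiso : ∀ x : ℚ_[p], ‖algebraMap ℚ_[p] K x‖ = ‖x‖)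
    (π : K) (hroot : HasSum (fun i : ℕ => π ^ p ^ i / (p : K) ^ i) 0)
    (hval : ‖π‖ = (p : ℝ) ^ (-(1 / ((p : ℝ) ^ l - (p : ℝ) ^ (l - 1))))) :
    ∃ π' : K,
      (HasSum (fun i : ℕ => π' ^ p ^ i / (p : K) ^ i) 0 ∧ ‖π'‖ < 1 ∧
          ‖π' - π ^ p‖ ≤ ‖(p : K) * π‖ ∧
          ‖π'‖ = (p : ℝ) ^ (-(1 / ((p : ℝ) ^ (l - 1) - (p : ℝ) ^ (l - 2))))) ∧
        ∀ π'' : K,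
          (HasSum (fun i : ℕ => π'' ^ p ^ i / (p : K) ^ i) 0 ∧ ‖π''‖ < 1 ∧
            ‖π'' - π ^ p‖ ≤ ‖(p : K) * π‖) → π'' = π' := by
  classical
  obtain ⟨m, rfl⟩ : ∃ m, l = m + 2 := ⟨l - 2, by omega⟩
  have hp : p.Prime := Fact.out
  have hp2 : 2 ≤ p := hp.two_le
  have hq1 : (1 : ℝ) < p := by exact_mod_cast hp.one_lt
  have hq0 : (0 : ℝ) < p := lt_trans one_pos hq1
  -- CharZero K
  have hinj : Function.Injective (algebraMap ℚ_[p] K) := by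
    intro a b hab
    have h0 : ‖a - b‖ = 0 := by
      rw [← hiso, map_sub, hab, sub_self, norm_zero]
    exact sub_eq_zero.mp (norm_eq_zero.mp h0)
  have : CharZero K := charZero_of_injective_algebraMap hinj
  have hpK : ‖(p : K)‖ = (p : ℝ)⁻¹ := by
    have h := hiso (p : ℚ_[p])
    rw [map_natCast] at h
    rw [h, Padic.norm_p]
  have hnat : ∀ n : ℕ, ‖(n : K)‖ ≤ 1 := by
    intro n
    have h := hiso (n : ℚ_[p])
    rw [map_natCast] at h
    rw [h]
    exact_mod_cast Padic.norm_int_le_one (n : ℤ)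
  have hpKne : (p : K) ≠ 0 := Nat.cast_ne_zero.mpr hp.ne_zero
  -- numerics
  set q : ℝ := (p : ℝ) with hqdef
  set A : ℝ := ‖π‖ with hAdef
  have hDsimp : (m + 2) - 1 = m + 1 := rfl
  have hD0 : (0 : ℝ) < q ^ (m + 2) - q ^ (m + 1) := by
    have : q ^ (m + 1) < q ^ (m + 2) := pow_lt_pow_right₀ hq1 (by omega)
    linarith
  have hE0 : (0 : ℝ) < q ^ (m + 1) - q ^ m := by
    have : q ^ m < q ^ (m + 1) := pow_lt_pow_right₀ hq1 (by omega)
    linarith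
  set v : ℝ := 1 / (q ^ (m + 2) - q ^ (m + 1)) with hvdef
  have hv0 : 0 < v := by positivity
  have hvalA : A = q ^ (-v) := hval
  have hA0 : 0 < A := by rw [hvalA]; positivity
  have hA1 : A < 1 := by
    rw [hvalA]
    exact Real.rpow_lt_one_of_one_lt_of_neg hq1 (by linarith)
  set ρ : ℝ := A ^ p with hρdef
  set r : ℝ := (p : ℝ)⁻¹ * A with hrdef
  have hρ0 : 0 < ρ := pow_pos hA0 p
  have hρ1 : ρ < 1 := pow_lt_one₀ hA0.le hA1 (by omega)
  have hr0 : 0 < r := by positivity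
  have hr1 : r < 1 := by
    have h1 : (p : ℝ)⁻¹ ≤ 1 := by
      rw [inv_le_one_iff₀]; right; linarith
    nlinarith
  have hrρ : r < ρ := by
    -- r = q^{-(1+v)}, ρ = q^{-vp}
    have h1 : r = q ^ (-(1 + v)) := by
      rw [hrdef, hvalA, neg_add, Real.rpow_add hq0, Real.rpow_neg_one]
    have h2 : ρ = q ^ (-(v * p)) := by
      rw [hρdef, hvalA, ← Real.rpow_natCast (q ^ (-v)) p, ← Real.rpow_mul hq0.le]
      ring_nf
    rw [h1, h2]
    rw [Real.rpow_lt_rpow_left_iff hq1]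
    have hvp : v * p < 1 + v := by
      have : v * (p - 1) < 1 := by
        rw [hvdef]
        rw [div_mul_eq_mul_div, div_lt_one hD0]
        have hle : q ≤ q ^ (m + 1) := by
          calc q = q ^ 1 := (pow_one q).symm
            _ ≤ q ^ (m + 1) := pow_le_pow_right₀ hq1.le (by omega)
        have hpow2 : q ^ (m + 2) = q ^ (m + 1) * q := pow_succ q (m + 1)
        have hmul : q * (q - 1) ≤ q ^ (m + 1) * (q - 1) :=
          mul_le_mul_of_nonneg_right hle (by linarith)
        nlinarith [hmul, hpow2, sq_nonneg (q - 1)]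
      nlinarith
    linarith
  have hnorm_pK_pow : ∀ i : ℕ, ‖((p : K)) ^ i‖ = ((p : ℝ)⁻¹) ^ i := by
    intro i; rw [norm_pow, hpK]
  have hterm_norm : ∀ (x : K) (i : ℕ), ‖x ^ p ^ i / (p : K) ^ i‖ = ‖x‖ ^ p ^ i * (p : ℝ) ^ i := by
    intro x i
    rw [norm_div, norm_pow, hnorm_pK_pow, inv_pow, div_eq_mul_inv, inv_inv]
  -- summability on the closed disk of radius ρ
  have hsummable : ∀ x : K, ‖x‖ ≤ ρ → Summable (fun i : ℕ => x ^ p ^ i / (p : K) ^ i) := by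
    intro x hx
    apply NonarchimedeanAddGroup.summable_of_tendsto_cofinite_zero
    rw [Nat.cofinite_eq_atTop, tendsto_zero_iff_norm_tendsto_zero]
    have hcomp : Filter.Tendsto (fun i : ℕ => ((p ^ i : ℕ) : ℝ) * ρ ^ (p ^ i : ℕ))
        Filter.atTop (nhds 0) :=
      (tendsto_self_mul_const_pow_of_lt_one hρ0.le hρ1).comp
        (tendsto_pow_atTop_atTop_of_one_lt hp.one_lt)
    refine squeeze_zero (fun i => norm_nonneg _) (fun i => ?_) hcomp
    rw [hterm_norm]
    have h1 : ‖x‖ ^ p ^ i ≤ ρ ^ p ^ i := pow_le_pow_left₀ (norm_nonneg _) hx _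
    have h2 : ((p : ℝ)) ^ i ≤ ((p ^ i : ℕ) : ℝ) := by push_cast; exact le_of_eq rfl
    calc ‖x‖ ^ p ^ i * (p : ℝ) ^ i ≤ ρ ^ p ^ i * ((p ^ i : ℕ) : ℝ) := by
          exact mul_le_mul h1 h2 (by positivity) (by positivity)
      _ = ((p ^ i : ℕ) : ℝ) * ρ ^ p ^ i := by ring
  -- the Artin–Hasse function
  set f : K → K := fun x => ∑' i : ℕ, x ^ p ^ i / (p : K) ^ i with hfdef
  -- functional equation value at π ^ p
  have hstar : HasSum (fun i : ℕ => (π ^ p) ^ p ^ i / (p : K) ^ i) (-((p : K) * π)) := by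
    have h1 : HasSum (fun i : ℕ => π ^ p ^ (i + 1) / (p : K) ^ (i + 1)) (-π) := by
      have h0 : HasSum (fun i : ℕ => π ^ p ^ i / (p : K) ^ i)
          (-π + ∑ i ∈ Finset.range 1, π ^ p ^ i / (p : K) ^ i) := by
        simpa using hroot
      exact (hasSum_nat_add_iff 1).mpr h0
    have h2 := h1.mul_left (p : K)
    have heq : (fun i : ℕ => (p : K) * (π ^ p ^ (i + 1) / (p : K) ^ (i + 1)))
        = fun i : ℕ => (π ^ p) ^ p ^ i / (p : K) ^ i := by
      funext i
      have hxp : (π ^ p) ^ p ^ i = π ^ p ^ (i + 1) := by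
        rw [← pow_mul, ← pow_succ']
      rw [hxp, pow_succ]
      have hne' : ((p : K) ^ i) ≠ 0 := pow_ne_zero _ hpKne
      field_simp
      ring
    rw [heq] at h2
    rw [mul_neg] at h2
    exact h2
  have hρx0 : ‖π ^ p‖ = ρ := by rw [norm_pow]
  have hrnorm : ‖(p : K) * π‖ = r := by rw [norm_mul, hpK]
  have hfx0 : f (π ^ p) = -((p : K) * π) := hstar.tsum_eq
  -- norms inside the ball
  have hmem_norm : ∀ x : K, ‖x - π ^ p‖ ≤ r → ‖x‖ ≤ ρ := by
    intro x hx
    have h1 : x = π ^ p + (x - π ^ p) := by ring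
    calc ‖x‖ = ‖π ^ p + (x - π ^ p)‖ := by rw [← h1]
      _ ≤ max ‖π ^ p‖ ‖x - π ^ p‖ := IsUltrametricDist.norm_add_le_max _ _
      _ ≤ ρ := max_le (le_of_eq hρx0) (hx.trans hrρ.le)
  -- preliminary bounds
  have hρ_le_A : ρ ^ (p - 1) ≤ A := by
    rw [hρdef, ← pow_mul]
    calc A ^ (p * (p - 1)) ≤ A ^ 1 := pow_le_pow_of_le_one hA0.le hA1.le (Nat.one_le_iff_ne_zero.mpr (Nat.mul_ne_zero (by omega) (by omega)))
      _ = A := pow_one A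
  have hr_pow : r ^ (p - 1) ≤ (p : ℝ)⁻¹ * A := by
    calc r ^ (p - 1) ≤ r ^ 1 := pow_le_pow_of_le_one hr0.le hr1.le (by omega)
      _ = r := pow_one r
  -- the iterated Frobenius estimate
  have hiter : ∀ x y : K, ‖x‖ ≤ ρ → ‖y‖ ≤ ρ → ‖x - y‖ ≤ r → ∀ i : ℕ,
      ‖x ^ p ^ (i + 1) - y ^ p ^ (i + 1)‖ ≤ ((p : ℝ) ^ (i + 1))⁻¹ * (A * ‖x - y‖) := by
    intro x y hx hy hδ i
    have hδ1 : ‖x - y‖ ≤ 1 := hδ.trans hr1.le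
    induction i with
    | zero =>
      have h := ah_step hp hpK.le hnat x y hx hy
      simp only [zero_add, pow_one] at *
      refine h.trans (max_le ?_ ?_)
      · exact mul_le_mul_of_nonneg_left
          (mul_le_mul_of_nonneg_right hρ_le_A (norm_nonneg _)) (by positivity)
      · obtain ⟨j, hj⟩ : ∃ j, p = j + 1 := ⟨p - 1, by omega⟩
        have hj' : j = p - 1 := by omega
        calc ‖x - y‖ ^ p = ‖x - y‖ ^ j * ‖x - y‖ := by rw [hj, pow_succ]
          _ ≤ r ^ j * ‖x - y‖ :=
              mul_le_mul_of_nonneg_right (pow_le_pow_left₀ (norm_nonneg _) hδ _) (norm_nonneg _)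
          _ ≤ ((p : ℝ)⁻¹ * A) * ‖x - y‖ := by
              refine mul_le_mul_of_nonneg_right ?_ (norm_nonneg _)
              rw [hj']
              exact hr_pow
          _ = (p : ℝ)⁻¹ * (A * ‖x - y‖) := by ring
    | succ i ih =>
      have hxn : ‖x ^ p ^ (i + 1)‖ ≤ ρ := by
        rw [norm_pow]
        calc ‖x‖ ^ p ^ (i + 1) ≤ ρ ^ p ^ (i + 1) := pow_le_pow_left₀ (norm_nonneg _) hx _
          _ ≤ ρ ^ 1 := pow_le_pow_of_le_one hρ0.le hρ1.le (Nat.one_le_pow _ _ hp.pos)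
          _ = ρ := pow_one ρ
      have hyn : ‖y ^ p ^ (i + 1)‖ ≤ ρ := by
        rw [norm_pow]
        calc ‖y‖ ^ p ^ (i + 1) ≤ ρ ^ p ^ (i + 1) := pow_le_pow_left₀ (norm_nonneg _) hy _
          _ ≤ ρ ^ 1 := pow_le_pow_of_le_one hρ0.le hρ1.le (Nat.one_le_pow _ _ hp.pos)
          _ = ρ := pow_one ρ
      have h := ah_step hp hpK.le hnat (x ^ p ^ (i + 1)) (y ^ p ^ (i + 1)) hxn hyn
      have hpow : ∀ z : K, (z ^ p ^ (i + 1)) ^ p = z ^ p ^ (i + 2) := by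
        intro z
        rw [← pow_mul, ← pow_succ]
      rw [hpow, hpow] at h
      set d := ‖x ^ p ^ (i + 1) - y ^ p ^ (i + 1)‖ with hddef
      set u := ((p : ℝ) ^ (i + 1))⁻¹ * (A * ‖x - y‖) with hudef
      have hd0 : 0 ≤ d := norm_nonneg _
      have hdu : d ≤ u := ih
      have hu0 : 0 ≤ u := hd0.trans hdu
      have huinv : ((p : ℝ) ^ (i + 1))⁻¹ ≤ (p : ℝ)⁻¹ := by
        apply inv_anti₀ hq0
        calc (p : ℝ) = (p : ℝ) ^ 1 := (pow_one _).symm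
          _ ≤ (p : ℝ) ^ (i + 1) := pow_le_pow_right₀ hq1.le (by omega)
      have hAδ1 : A * ‖x - y‖ ≤ 1 := by
        calc A * ‖x - y‖ ≤ 1 * 1 := mul_le_mul hA1.le hδ1 (norm_nonneg _) zero_le_one
          _ = 1 := one_mul 1
      have hup : u ≤ (p : ℝ)⁻¹ := by
        calc u ≤ (p : ℝ)⁻¹ * 1 := mul_le_mul huinv hAδ1 (by positivity) (by positivity)
          _ = (p : ℝ)⁻¹ := mul_one _
      have hu1 : u ≤ 1 := by
        refine hup.trans ?_
        rw [inv_le_one_iff₀]; right; linarith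
      have htarget : ((p : ℝ) ^ (i + 2))⁻¹ * (A * ‖x - y‖) = (p : ℝ)⁻¹ * u := by
        rw [hudef, pow_succ, mul_inv]
        ring
      rw [htarget]
      refine h.trans (max_le ?_ ?_)
      · -- p⁻¹ * (ρ^{p-1} * d) ≤ p⁻¹ * u
        have hρp1 : ρ ^ (p - 1) ≤ 1 := pow_le_one₀ hρ0.le hρ1.le
        have hmid : ρ ^ (p - 1) * d ≤ u := by
          calc ρ ^ (p - 1) * d ≤ 1 * u := mul_le_mul hρp1 hdu hd0 zero_le_one
            _ = u := one_mul u
        exact mul_le_mul_of_nonneg_left hmid (by positivity)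
      · -- d^p ≤ p⁻¹ * u
        obtain ⟨j, hj⟩ : ∃ j, p = j + 1 := ⟨p - 1, by omega⟩
        have hj1 : 1 ≤ j := by omega
        have hupow : u ^ j ≤ (p : ℝ)⁻¹ := by
          calc u ^ j ≤ u ^ 1 := pow_le_pow_of_le_one hu0 hu1 hj1
            _ = u := pow_one u
            _ ≤ (p : ℝ)⁻¹ := hup
        calc d ^ p ≤ u ^ p := pow_le_pow_left₀ hd0 hdu _
          _ = u ^ j * u := by rw [hj, pow_succ]
          _ ≤ (p : ℝ)⁻¹ * u := mul_le_mul_of_nonneg_right hupow hu0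
  -- the contraction estimate
  have hcontr : ∀ x y : K, ‖x‖ ≤ ρ → ‖y‖ ≤ ρ → ‖x - y‖ ≤ r →
      ‖(x - f x) - (y - f y)‖ ≤ A * ‖x - y‖ := by
    intro x y hx hy hδ
    have hsx := hsummable x hx
    have hsy := hsummable y hy
    set g : ℕ → K := fun i => (x ^ p ^ i - y ^ p ^ i) / (p : K) ^ i with hgdef
    have hg : Summable g := by
      have := hsx.sub hsy
      simpa [hgdef, sub_div] using this
    have hfg : f x - f y = ∑' i, g i := by
      rw [hfdef, hgdef]
      simp only [sub_div]
      exact (Summable.tsum_sub hsx hsy).symm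
    have hg0 : g 0 = x - y := by
      simp [hgdef]
    have hsplit : ∑' i, g i = g 0 + ∑' i, g (i + 1) := Summable.tsum_eq_zero_add hg
    have hkey : (x - f x) - (y - f y) = -∑' i, g (i + 1) := by
      have h' : (x - f x) - (y - f y) = (x - y) - (f x - f y) := by ring
      rw [h', hfg, hsplit, hg0]
      ring
    rw [hkey, norm_neg]
    refine IsUltrametricDist.norm_tsum_le_of_forall_le_of_nonneg (by positivity) ?_
    intro i
    have hnorm : ‖g (i + 1)‖ = ‖x ^ p ^ (i + 1) - y ^ p ^ (i + 1)‖ * (p : ℝ) ^ (i + 1) := by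
      rw [hgdef]
      simp only
      rw [norm_div, hnorm_pK_pow, inv_pow, div_eq_mul_inv, inv_inv]
    rw [hnorm]
    have h := hiter x y hx hy hδ i
    have hppos : (0 : ℝ) < (p : ℝ) ^ (i + 1) := by positivity
    calc ‖x ^ p ^ (i + 1) - y ^ p ^ (i + 1)‖ * (p : ℝ) ^ (i + 1)
        ≤ (((p : ℝ) ^ (i + 1))⁻¹ * (A * ‖x - y‖)) * (p : ℝ) ^ (i + 1) :=
          mul_le_mul_of_nonneg_right h hppos.le
      _ = A * ‖x - y‖ := by field_simp
  -- set up the contraction on the closed ball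
  set T : K → K := fun x => x - f x with hTdef
  set S : Set K := Metric.closedBall (π ^ p) r with hSdef
  have hball_norm : ∀ x ∈ S, ‖x - π ^ p‖ ≤ r := by
    intro x hx
    rw [hSdef, Metric.mem_closedBall, dist_eq_norm] at hx
    exact hx
  have hTx0 : ‖T (π ^ p) - π ^ p‖ = r := by
    rw [hTdef]
    simp only
    have : π ^ p - f (π ^ p) - π ^ p = (p : K) * π := by
      rw [hfx0]; ring
    rw [this, hrnorm]
  have hmaps : Set.MapsTo T S S := by
    intro x hx
    have hxr := hball_norm x hx
    have hxρ := hmem_norm x hxr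
    rw [hSdef, Metric.mem_closedBall, dist_eq_norm]
    have hx0ρ : ‖(π ^ p : K)‖ ≤ ρ := le_of_eq hρx0
    have h1 : ‖T x - T (π ^ p)‖ ≤ A * ‖x - π ^ p‖ := hcontr x (π ^ p) hxρ hx0ρ hxr
    calc ‖T x - π ^ p‖ = ‖(T x - T (π ^ p)) + (T (π ^ p) - π ^ p)‖ := by ring_nf
      _ ≤ max ‖T x - T (π ^ p)‖ ‖T (π ^ p) - π ^ p‖ := IsUltrametricDist.norm_add_le_max _ _
      _ ≤ r := by
          refine max_le ?_ (le_of_eq hTx0)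
          calc ‖T x - T (π ^ p)‖ ≤ A * ‖x - π ^ p‖ := h1
            _ ≤ 1 * r := mul_le_mul hA1.le hxr (norm_nonneg _) zero_le_one
            _ = r := one_mul r
  have hsc : IsComplete S := Metric.isClosed_closedBall.isComplete
  have hcw : ContractingWith ‖π‖₊ (hmaps.restrict T S S) := by
    constructor
    · rw [← NNReal.coe_lt_one]
      exact hA1
    · refine LipschitzWith.of_dist_le_mul ?_
      rintro ⟨x, hx⟩ ⟨y, hy⟩
      simp only [Subtype.dist_eq, Set.MapsTo.val_restrict_apply]
      rw [dist_eq_norm, dist_eq_norm]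
      have hxr := hball_norm x hx
      have hyr := hball_norm y hy
      have hxy : ‖x - y‖ ≤ r := by
        calc ‖x - y‖ = ‖(x - π ^ p) - (y - π ^ p)‖ := by ring_nf
          _ ≤ max ‖x - π ^ p‖ ‖y - π ^ p‖ := ah_norm_sub_le_max _ _
          _ ≤ r := max_le hxr hyr
      exact hcontr x y (hmem_norm x hxr) (hmem_norm y hyr) hxy
  have hx0S : (π ^ p) ∈ S := Metric.mem_closedBall_self hr0.le
  obtain ⟨π', hπ'S, hfix, -, -⟩ :=
    hcw.exists_fixedPoint' hsc hmaps hx0S (edist_ne_top _ _)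
  have hπ'r : ‖π' - π ^ p‖ ≤ r := hball_norm π' hπ'S
  have hπ'ρ : ‖π'‖ ≤ ρ := hmem_norm π' hπ'r
  have hfπ' : f π' = 0 := by
    have : π' - f π' = π' := hfix
    exact sub_eq_self.mp this
  have hsumπ' : Summable (fun i : ℕ => π' ^ p ^ i / (p : K) ^ i) := hsummable π' hπ'ρ
  have hhasπ' : HasSum (fun i : ℕ => π' ^ p ^ i / (p : K) ^ i) 0 := by
    have h := hsumπ'.hasSum
    rwa [show (∑' i : ℕ, π' ^ p ^ i / (p : K) ^ i) = 0 from hfπ'] at h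
  have hπ'norm : ‖π'‖ = ρ := by
    have h1 : π' = π ^ p + (π' - π ^ p) := by ring
    have hne : ‖(π ^ p : K)‖ ≠ ‖π' - π ^ p‖ := by
      rw [hρx0]
      exact ne_of_gt (lt_of_le_of_lt hπ'r hrρ)
    calc ‖π'‖ = ‖π ^ p + (π' - π ^ p)‖ := by rw [← h1]
      _ = max ‖(π ^ p : K)‖ ‖π' - π ^ p‖ := IsUltrametricDist.norm_add_eq_max_of_norm_ne_norm hne
      _ = ρ := by
          rw [hρx0, max_eq_left (hπ'r.trans hrρ.le)]
  have hρval : ρ = (p : ℝ) ^ (-(1 / ((p : ℝ) ^ (m + 2 - 1) - (p : ℝ) ^ (m + 2 - 2)))) := by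
    have h2 : ρ = q ^ (-(v * p)) := by
      rw [hρdef, hvalA, ← Real.rpow_natCast (q ^ (-v)) p, ← Real.rpow_mul hq0.le]
      ring_nf
    rw [h2]
    congr 1
    have hsub1 : m + 2 - 1 = m + 1 := rfl
    have hsub2 : m + 2 - 2 = m := rfl
    rw [hsub1, hsub2]
    have hfact : q ^ (m + 2) - q ^ (m + 1) = q * (q ^ (m + 1) - q ^ m) := by ring
    rw [hvdef, hfact]
    field_simp
    rw [← hqdef, mul_div_assoc, div_self hE0.ne', mul_one]
  refine ⟨π', ⟨hhasπ', lt_of_le_of_lt hπ'ρ hρ1, by rw [hrnorm]; exact hπ'r,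
      by rw [hπ'norm, hρval]⟩, ?_⟩
  rintro π'' ⟨hsum'', -, hdist''⟩
  rw [hrnorm] at hdist''
  have hπ''ρ : ‖π''‖ ≤ ρ := hmem_norm π'' hdist''
  have hfπ'' : f π'' = 0 := hsum''.tsum_eq
  have hd : ‖π'' - π'‖ ≤ r := by
    calc ‖π'' - π'‖ = ‖(π'' - π ^ p) - (π' - π ^ p)‖ := by ring_nf
      _ ≤ max ‖π'' - π ^ p‖ ‖π' - π ^ p‖ := ah_norm_sub_le_max _ _
      _ ≤ r := max_le hdist'' hπ'r
  have hc := hcontr π'' π' hπ''ρ hπ'ρ hd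
  rw [hfπ', hfπ''] at hc
  simp only [sub_zero] at hc
  by_contra hne
  have hpos : 0 < ‖π'' - π'‖ := norm_pos_iff.mpr (sub_ne_zero.mpr hne)
  nlinarith
end

section
/- Let π_l be a root of the Artin–Hasse series with v_p(π_l) = 1/(p^l - p^{l-1}) and let θ_l(X) = E(π_l X) = Σ_{n≥0} λ_{n,l} X^n, where E is the Artin–Hasse exponential. Then v_p(λ_{n,l}) ≥ n/(p^l - p^{l-1}) for all n ≥ 0, and λ_{n,l} = π_l^n/n! for 0 ≤ n ≤ p-1. In particular θ_l converges on the open disk of radius p^{1/(p^l - p^{l-1})} in ℂ_p. -/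
/-! Taking logarithms, `E(X)^p = E(X^p) · exp(pX)` for the Artin–Hasse exponential `E = exp(AH)`,
because `p · AH(X) = AH(X^p) + pX`; formally, both sides solve `F' = p · AH' · F`, `F(0) = 1`.
For `j ≥ 1` the coefficient `p^j / j!` of `exp(pX)` lies in `pℤ_p`, so Dwork's criterion puts `E`
in `ℤ_p⟦X⟧`: if `e_0, …, e_{N-1}` are integral and `T` is the truncation of `E` below `X^N`, then
in degree `N` and modulo `p` we have `E^p ≡ E(X^p) = T(X^p) ≡ T^p`, while `E^p` and `T^p` differ
there by `p e_N`; so `p e_N ∈ pℤ_p`. Hence `|λ_n| = |e_n| |π|^n ≤ |π|^n`. For `n < p` only the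
constant term of `AH' = ∑ X^{p^k - 1}` enters the recursion `(n+1) e_{n+1} = (AH' E)_n`, so
`e_n = 1/n!`. -/

open PowerSeries

/-- The Artin–Hasse logarithm `AH(X) = ∑_{i≥0} X^{p^i}/p^i` as a formal power series. -/
noncomputable def artinHasseLog (p : ℕ) [Fact p.Prime] : PowerSeries ℚ_[p] :=
  PowerSeries.mk fun n =>
    if p ^ (Nat.log p n) = n ∧ n ≠ 0 then ((p : ℚ_[p]) ^ (Nat.log p n))⁻¹ else 0

namespace PowerSeries

theorem eq_of_derivative_eq_mul {R : Type*} [CommRing R] [IsAddTorsionFree R] {u F G : R⟦X⟧}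
    (hF : derivative R F = u * F) (hG : derivative R G = u * G)
    (h0 : constantCoeff F = constantCoeff G) : F = G := by
  ext n
  refine Nat.strong_induction_on n fun n ih => ?_
  rcases n with _ | n
  · simpa using h0
  have hsum : coeff n (u * F) = coeff n (u * G) := by
    simp only [coeff_mul]
    refine Finset.sum_congr rfl fun ij hij => ?_
    rw [ih ij.2 (by grind [Finset.HasAntidiagonal.mem_antidiagonal])]
  have h : (n + 1) • coeff (n + 1) F = (n + 1) • coeff (n + 1) G := by
    have hF' := congrArg (coeff n) hF
    have hG' := congrArg (coeff n) hG
    rw [coeff_derivative] at hF' hG'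
    rw [nsmul_eq_mul, nsmul_eq_mul, Nat.cast_succ, mul_comm, hF', hsum, ← hG', mul_comm]
  exact (smul_right_inj n.succ_ne_zero).mp h

theorem derivative_expand {R : Type*} [CommRing R] (p : ℕ) (hp : p ≠ 0) (F : R⟦X⟧) :
    derivative R (expand p hp F) = (p : R⟦X⟧) * X ^ (p - 1) * expand p hp (derivative R F) := by
  rw [expand_apply, derivative_subst (HasSubst.X_pow hp), ← expand_apply, derivative_pow,
    derivative_X, mul_one, mul_comm]

theorem coeff_pow_eq_coeff_trunc_pow_add {R : Type*} [CommRing R] {N : ℕ} (hN : 0 < N)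
    (F : R⟦X⟧) (n : ℕ) :
    coeff N (F ^ n) =
      coeff N ((trunc N F : R⟦X⟧) ^ n) + n * constantCoeff F ^ (n - 1) * coeff N F := by
  set T : R⟦X⟧ := ↑(trunc N F)
  obtain ⟨S, hS⟩ : X ^ N ∣ F - T :=
    X_pow_dvd_iff.2 fun m hm => by rw [map_sub, coeff_coe_trunc_of_lt hm, sub_self]
  have hT0 : constantCoeff T = constantCoeff F := by
    rw [← coeff_zero_eq_constantCoeff_apply, coeff_coe_trunc_of_lt hN, coeff_zero_eq_constantCoeff]
  have hFN : coeff N F = constantCoeff S := by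
    have := congrArg (coeff N) hS
    rwa [map_sub, Polynomial.coeff_coe, coeff_trunc, if_neg (lt_irrefl N), sub_zero,
      coeff_X_pow_mul', if_pos le_rfl, Nat.sub_self, coeff_zero_eq_constantCoeff] at this
  have hsq : X ^ (N + 1) ∣ (T + (F - T)) ^ n - T ^ (n - 1) * (F - T) * (n : R⟦X⟧) - T ^ n := by
    refine dvd_trans ?_ (sq_dvd_add_pow_sub_sub _ _ _)
    rw [hS, mul_pow, ← pow_mul]
    exact dvd_mul_of_dvd_left (pow_dvd_pow _ (by omega)) _
  have hcoeff := X_pow_dvd_iff.1 hsq N (Nat.lt_succ_self N)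
  rw [add_sub_cancel, map_sub, map_sub, sub_eq_zero, sub_eq_iff_eq_add] at hcoeff
  rw [hcoeff, hS, add_comm, ← map_natCast (C (R := R)), coeff_mul_C, mul_left_comm,
    coeff_X_pow_mul', if_pos le_rfl, Nat.sub_self, coeff_zero_eq_constantCoeff, map_mul, map_pow,
    hT0, hFN]
  ring

theorem norm_coeff_mul_le {R : Type*} [NormedCommRing R] [IsUltrametricDist R] {A B : R⟦X⟧}
    {n : ℕ} {r : ℝ} (hA : ∀ i ≤ n, ‖coeff i A‖ ≤ 1) (hB : ∀ j ≤ n, ‖coeff j B‖ ≤ r) :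
    ‖coeff n (A * B)‖ ≤ r := by
  rw [coeff_mul]
  refine IsUltrametricDist.norm_sum_le_of_forall_le_of_nonneg
    ((norm_nonneg _).trans (hB 0 n.zero_le)) fun ij hij => ?_
  rw [Finset.HasAntidiagonal.mem_antidiagonal] at hij
  calc ‖coeff ij.1 A * coeff ij.2 B‖ ≤ ‖coeff ij.1 A‖ * ‖coeff ij.2 B‖ := norm_mul_le _ _
    _ ≤ 1 * r := mul_le_mul (hA _ (by omega)) (hB _ (by omega)) (norm_nonneg _) zero_le_one
    _ = r := one_mul r

theorem expand_zmod_eq_pow (p : ℕ) [Fact p.Prime] (f : (ZMod p)⟦X⟧) :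
    expand p (Fact.out : p.Prime).ne_zero f = f ^ p := by
  have h := MvPowerSeries.map_frobenius_expand p (Fact.out : p.Prime).ne_zero (f := f)
  rwa [ZMod.frobenius_zmod, MvPowerSeries.map_id] at h

end PowerSeries

theorem PadicInt.norm_le_inv_of_norm_lt_one {p : ℕ} [Fact p.Prime] {x : ℤ_[p]} (hx : ‖x‖ < 1) :
    ‖x‖ ≤ (p : ℝ)⁻¹ := by
  simpa using (PadicInt.norm_le_pow_iff_norm_lt_pow_add_one x (-1)).2 (by simpa using hx)

theorem PadicInt.norm_coeff_pow_sub_expand_le {p : ℕ} [Fact p.Prime] (T : ℤ_[p]⟦X⟧) (n : ℕ) :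
    ‖coeff n (T ^ p - expand p (Fact.out : p.Prime).ne_zero T)‖ ≤ (p : ℝ)⁻¹ := by
  refine PadicInt.norm_le_inv_of_norm_lt_one (PadicInt.mem_nonunits.1 ?_)
  rw [← IsLocalRing.mem_maximalIdeal, ← PadicInt.ker_toZMod, RingHom.mem_ker, ← coeff_map,
    map_sub, map_pow, map_expand, expand_zmod_eq_pow, sub_self, map_zero]

theorem Padic.norm_coeff_pow_sub_expand_le {p : ℕ} [Fact p.Prime] {T : ℚ_[p]⟦X⟧}
    (hT : ∀ k, ‖coeff k T‖ ≤ 1) (n : ℕ) :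
    ‖coeff n (T ^ p - expand p (Fact.out : p.Prime).ne_zero T)‖ ≤ (p : ℝ)⁻¹ := by
  obtain ⟨T, rfl⟩ : ∃ T' : ℤ_[p]⟦X⟧, map PadicInt.Coe.ringHom T' = T :=
    ⟨PowerSeries.mk fun k => ⟨coeff k T, hT k⟩, by ext k; erw [coeff_map, coeff_mk]; rfl⟩
  rw [← map_pow, ← map_expand, ← map_sub, coeff_map]
  exact PadicInt.norm_coeff_pow_sub_expand_le T n

theorem Padic.norm_pow_div_factorial_le {p : ℕ} [Fact p.Prime] {j : ℕ} (hj : j ≠ 0) :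
    ‖(p : ℚ_[p]) ^ j / j.factorial‖ ≤ (p : ℝ)⁻¹ := by
  have hv := padicValNat_factorial_lt_of_ne_zero p hj
  have hnorm : ‖(j.factorial : ℚ_[p])‖ = (p : ℝ) ^ (-(padicValNat p j.factorial : ℤ)) := by
    rw [Padic.norm_eq_zpow_neg_valuation (by exact_mod_cast j.factorial_ne_zero),
      Padic.valuation_natCast]
  have hp : (1 : ℝ) ≤ p := by exact_mod_cast (Fact.out : p.Prime).one_le
  rw [norm_div, Padic.norm_p_pow, hnorm, ← zpow_sub₀ (by positivity), ← zpow_neg_one]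
  exact zpow_le_zpow_right₀ hp (by omega)

theorem Padic.norm_coeff_exp_pow_sub_one_le {p : ℕ} [Fact p.Prime] (n : ℕ) :
    ‖coeff n (exp ℚ_[p] ^ p - 1)‖ ≤ (p : ℝ)⁻¹ := by
  rcases eq_or_ne n 0 with rfl | hn
  · simp
  rw [map_sub, coeff_one, if_neg hn, sub_zero, exp_pow_eq_rescale_exp, coeff_rescale, coeff_exp,
    map_div₀, map_one, map_natCast, ← div_eq_mul_one_div]
  exact Padic.norm_pow_div_factorial_le hn

-- The integrality half of Dwork's criterion.
theorem Padic.norm_coeff_le_one_of_pow_eq_expand_mul {p : ℕ} [Fact p.Prime] {F G : ℚ_[p]⟦X⟧}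
    (hF0 : constantCoeff F = 1) (hG : ∀ n, ‖coeff n (G - 1)‖ ≤ (p : ℝ)⁻¹)
    (hFG : F ^ p = expand p (Fact.out : p.Prime).ne_zero F * G) (n : ℕ) :
    ‖coeff n F‖ ≤ 1 := by
  have hp : p ≠ 0 := (Fact.out : p.Prime).ne_zero
  refine Nat.strong_induction_on n fun N ih => ?_
  rcases eq_or_ne N 0 with rfl | hN
  · simp [hF0]
  set T : ℚ_[p]⟦X⟧ := ↑(trunc N F)
  have hT : ∀ k, ‖coeff k T‖ ≤ 1 := fun k => by
    rw [Polynomial.coeff_coe, coeff_trunc]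
    split_ifs with hk
    · exact ih k hk
    · simp
  have hexpand : ∀ i ≤ N, coeff i (expand p hp F) = coeff i (expand p hp T) := fun i hi => by
    rw [coeff_expand, coeff_expand]
    split_ifs
    · exact (coeff_coe_trunc_of_lt ((Nat.div_le_div_right hi).trans_lt
        (Nat.div_lt_self (Nat.pos_of_ne_zero hN) (Fact.out : p.Prime).one_lt))).symm
    · rfl
  have hrest : ‖coeff N (expand p hp F * (G - 1))‖ ≤ (p : ℝ)⁻¹ := by
    refine norm_coeff_mul_le (fun i hi => ?_) fun j _ => hG j
    rw [hexpand i hi, coeff_expand]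
    split_ifs
    · exact hT _
    · simp
  have hpf : (p : ℚ_[p]) * coeff N F =
      coeff N (expand p hp F * (G - 1)) - coeff N (T ^ p - expand p hp T) := by
    have h := congrArg (coeff N) hFG
    rw [coeff_pow_eq_coeff_trunc_pow_add (Nat.pos_of_ne_zero hN), hF0, one_pow, mul_one,
      ← add_sub_cancel (1 : ℚ_[p]⟦X⟧) G, mul_add, mul_one, map_add, hexpand N le_rfl] at h
    rw [map_sub]
    linear_combination h
  have hpf_norm : ‖(p : ℚ_[p]) * coeff N F‖ ≤ (p : ℝ)⁻¹ := by
    rw [hpf, sub_eq_add_neg]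
    refine (IsUltrametricDist.norm_add_le_max _ _).trans (max_le hrest ?_)
    rw [norm_neg]
    exact Padic.norm_coeff_pow_sub_expand_le hT N
  rw [norm_mul, Padic.norm_p] at hpf_norm
  exact le_of_mul_le_mul_left (by simpa using hpf_norm) (by simp [(Fact.out : p.Prime).pos])

theorem Nat.pow_log_eq_self_iff_of_le {p m : ℕ} (hp : 1 < p) (hm : p ≤ m) :
    p ^ log p m = m ↔ p ∣ m ∧ p ^ log p (m / p) = m / p := by
  have hlog : log p (m / p) + 1 = log p m := by
    rw [log_div_base]; have := log_pos hp hm; omega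
  constructor
  · intro h
    refine ⟨h ▸ dvd_pow_self p (by omega), ?_⟩
    rw [← hlog, pow_succ] at h
    exact (Nat.div_eq_of_eq_mul_left (by omega) h.symm).symm
  · rintro ⟨hdvd, h⟩
    rw [← hlog, pow_succ, h, Nat.div_mul_cancel hdvd]

theorem coeff_derivative_artinHasseLog (p : ℕ) [Fact p.Prime] (i : ℕ) :
    coeff i (derivative ℚ_[p] (artinHasseLog p)) =
      if p ^ Nat.log p (i + 1) = i + 1 then 1 else 0 := by
  rw [coeff_derivative, artinHasseLog, coeff_mk]
  by_cases h : p ^ Nat.log p (i + 1) = i + 1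
  · have hcast : (p : ℚ_[p]) ^ Nat.log p (i + 1) = i + 1 := by exact_mod_cast h
    rw [if_pos ⟨h, i.succ_ne_zero⟩, if_pos h, hcast, inv_mul_cancel₀ (Nat.cast_add_one_ne_zero i)]
  · rw [if_neg fun h' => h h'.1, if_neg h, zero_mul]

theorem X_pow_mul_expand_derivative_artinHasseLog (p : ℕ) [Fact p.Prime] :
    X ^ (p - 1) * expand p (Fact.out : p.Prime).ne_zero (derivative ℚ_[p] (artinHasseLog p)) =
      derivative ℚ_[p] (artinHasseLog p) - 1 := by
  have hp := (Fact.out : p.Prime).one_lt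
  ext n
  rw [coeff_X_pow_mul', map_sub, coeff_one, coeff_derivative_artinHasseLog]
  rcases lt_or_ge n (p - 1) with hn | hn
  · rw [if_neg (by omega), Nat.log_of_lt (by omega), pow_zero]
    by_cases hn0 : n = 0 <;> simp [hn0]
  rw [if_pos hn, if_neg (show n ≠ 0 by omega), sub_zero, coeff_expand,
    show n - (p - 1) = n + 1 - p by omega]
  by_cases hdvd : p ∣ n + 1
  · have hdiv : (n + 1 - p) / p + 1 = (n + 1) / p := by
      rw [← Nat.add_div_right _ (by omega : 0 < p), Nat.sub_add_cancel (by omega)]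
    rw [if_pos (Nat.dvd_sub_self_right.2 (Or.inl hdvd)), coeff_derivative_artinHasseLog, hdiv]
    simp only [Nat.pow_log_eq_self_iff_of_le hp (by omega : p ≤ n + 1), hdvd, true_and]
  · have hsub : ¬ p ∣ n + 1 - p := fun h => hdvd <| by
      rcases Nat.dvd_sub_self_right.1 h with h | h
      · exact h
      · exact (show n + 1 = p by omega) ▸ dvd_refl p
    rw [if_neg hsub, if_neg fun h => hdvd ((Nat.pow_log_eq_self_iff_of_le hp (by omega)).1 h).1]

namespace ArtinHasse

variable {p : ℕ} [Fact p.Prime] {E : ℚ_[p]⟦X⟧}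

theorem pow_eq_expand_mul_exp_pow (hE0 : constantCoeff E = 1)
    (hE : derivative ℚ_[p] E = derivative ℚ_[p] (artinHasseLog p) * E) :
    E ^ p = expand p (Fact.out : p.Prime).ne_zero E * exp ℚ_[p] ^ p := by
  have hp : p ≠ 0 := (Fact.out : p.Prime).ne_zero
  have hu := X_pow_mul_expand_derivative_artinHasseLog p
  set u := derivative ℚ_[p] (artinHasseLog p)
  refine eq_of_derivative_eq_mul (u := (p : ℚ_[p]⟦X⟧) * u) ?_ ?_ (by simp [hE0])
  · rw [derivative_pow, hE]
    linear_combination (p * u : ℚ_[p]⟦X⟧) * pow_sub_one_mul hp E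
  · rw [Derivation.leibniz, derivative_expand, hE, map_mul, derivative_pow, derivative_exp,
      smul_eq_mul, smul_eq_mul]
    linear_combination (p * expand p hp E : ℚ_[p]⟦X⟧) * pow_sub_one_mul hp (exp ℚ_[p])
      + (p * expand p hp E * exp ℚ_[p] ^ p) * hu

theorem norm_coeff_le_one (hE0 : constantCoeff E = 1)
    (hE : derivative ℚ_[p] E = derivative ℚ_[p] (artinHasseLog p) * E) (n : ℕ) :
    ‖coeff n E‖ ≤ 1 :=
  Padic.norm_coeff_le_one_of_pow_eq_expand_mul hE0 Padic.norm_coeff_exp_pow_sub_one_le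
    (pow_eq_expand_mul_exp_pow hE0 hE) n

theorem coeff_eq_inv_factorial (hE0 : constantCoeff E = 1)
    (hE : derivative ℚ_[p] E = derivative ℚ_[p] (artinHasseLog p) * E) {n : ℕ} (hn : n < p) :
    coeff n E = (n.factorial : ℚ_[p])⁻¹ := by
  induction n with
  | zero => simp [hE0]
  | succ n ih =>
    have hu := X_pow_mul_expand_derivative_artinHasseLog p
    have hlow : coeff n (derivative ℚ_[p] (artinHasseLog p) * E) = coeff n E := by
      rw [← sub_add_cancel (derivative ℚ_[p] (artinHasseLog p)) 1, ← hu, add_mul, one_mul,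
        map_add, mul_assoc, coeff_X_pow_mul', if_neg (by omega), zero_add]
    have h := congrArg (coeff n) hE
    rw [coeff_derivative, hlow, ih (by omega)] at h
    rw [Nat.factorial_succ, Nat.cast_mul, mul_inv, ← h, Nat.cast_succ]
    field_simp

end ArtinHasse

theorem summable_mul_pow_of_norm_le_pow {K : Type*} [NormedField K] [CompleteSpace K]
    {a : ℕ → K} {r : ℝ} (ha : ∀ n, ‖a n‖ ≤ r ^ n) {x : K} (hx : r * ‖x‖ < 1) :
    Summable fun n => a n * x ^ n := by
  have hr : 0 ≤ r := (norm_nonneg _).trans (by simpa using ha 1)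
  refine Summable.of_norm_bounded (summable_geometric_of_lt_one (by positivity) hx) fun n => ?_
  rw [norm_mul, norm_pow, mul_pow]
  gcongr
  exact ha n

theorem stmt_9_general (p : ℕ) [Fact p.Prime] (l : ℕ)
    {K : Type*} [NormedField K] [Algebra ℚ_[p] K] [CompleteSpace K]
    (hiso : ∀ x : ℚ_[p], ‖algebraMap ℚ_[p] K x‖ = ‖x‖)
    (E : PowerSeries ℚ_[p]) (hE0 : PowerSeries.constantCoeff (R := ℚ_[p]) E = 1)
    (hE : PowerSeries.derivative ℚ_[p] E
        = PowerSeries.derivative ℚ_[p] (artinHasseLog p) * E)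
    (π : K)
    (hval : ‖π‖ = (p : ℝ) ^ (-(1 / ((p : ℝ) ^ l - (p : ℝ) ^ (l - 1)))))
    (lam : ℕ → K) (hlam : ∀ n, lam n = algebraMap ℚ_[p] K (PowerSeries.coeff (R := ℚ_[p]) n E) * π ^ n) :
    (∀ n : ℕ, ‖lam n‖ ≤ (p : ℝ) ^ (-((n : ℝ) / ((p : ℝ) ^ l - (p : ℝ) ^ (l - 1))))) ∧
      (∀ n : ℕ, n ≤ p - 1 → lam n = π ^ n / (n.factorial : K)) ∧
      ∀ x : K, ‖x‖ < (p : ℝ) ^ (1 / ((p : ℝ) ^ l - (p : ℝ) ^ (l - 1))) →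
        Summable (fun n : ℕ => lam n * x ^ n) := by
  set c : ℝ := (p : ℝ) ^ l - (p : ℝ) ^ (l - 1)
  have hp : 0 < p := (Fact.out : p.Prime).pos
  have hlam_le : ∀ n, ‖lam n‖ ≤ ‖π‖ ^ n := fun n => by
    rw [hlam, norm_mul, hiso, norm_pow]
    exact mul_le_of_le_one_left (by positivity) (ArtinHasse.norm_coeff_le_one hE0 hE n)
  refine ⟨fun n => ?_, fun n hn => ?_, fun x hx => ?_⟩
  · calc ‖lam n‖ ≤ ‖π‖ ^ n := hlam_le n
      _ = (p : ℝ) ^ (-(n / c)) := by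
        rw [hval, ← Real.rpow_natCast, ← Real.rpow_mul (by positivity)]
        ring_nf
  · rw [hlam, ArtinHasse.coeff_eq_inv_factorial hE0 hE (by omega), map_inv₀, map_natCast,
      div_eq_inv_mul]
  · refine summable_mul_pow_of_norm_le_pow hlam_le ?_
    rwa [hval, Real.rpow_neg (by positivity), inv_mul_lt_iff₀ (by positivity), mul_one]

/-- Let `E = exp(AH)` be the Artin–Hasse exponential and `π_l` a root of `AH`
of valuation `1/(p^l - p^{l-1})`; write `θ_l(X) = E(π_l X) = ∑ λ_{n,l} X^n`,
so `λ_{n,l} = e_n π_l^n`. Then `v_p(λ_{n,l}) ≥ n/(p^l - p^{l-1})` for all `n`,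
`λ_{n,l} = π_l^n/n!` for `0 ≤ n ≤ p-1`, and `θ_l` converges on the open disk
of radius `p^{1/(p^l - p^{l-1})}`. -/
theorem stmt_9 (p : ℕ) [Fact p.Prime] (l : ℕ) (hl : 1 ≤ l)
    {K : Type*} [NormedField K] [Algebra ℚ_[p] K] [IsAlgClosed K] [CompleteSpace K]
    [IsUltrametricDist K]
    (hiso : ∀ x : ℚ_[p], ‖algebraMap ℚ_[p] K x‖ = ‖x‖)
    (E : PowerSeries ℚ_[p]) (hE0 : PowerSeries.constantCoeff (R := ℚ_[p]) E = 1)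
    (hE : PowerSeries.derivative ℚ_[p] E
        = PowerSeries.derivative ℚ_[p] (artinHasseLog p) * E)
    (π : K) (hroot : HasSum (fun i : ℕ => π ^ p ^ i / (p : K) ^ i) 0)
    (hval : ‖π‖ = (p : ℝ) ^ (-(1 / ((p : ℝ) ^ l - (p : ℝ) ^ (l - 1)))))
    (lam : ℕ → K) (hlam : ∀ n, lam n = algebraMap ℚ_[p] K (PowerSeries.coeff (R := ℚ_[p]) n E) * π ^ n) :
    (∀ n : ℕ, ‖lam n‖ ≤ (p : ℝ) ^ (-((n : ℝ) / ((p : ℝ) ^ l - (p : ℝ) ^ (l - 1))))) ∧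
      (∀ n : ℕ, n ≤ p - 1 → lam n = π ^ n / (n.factorial : K)) ∧
      ∀ x : K, ‖x‖ < (p : ℝ) ^ (1 / ((p : ℝ) ^ l - (p : ℝ) ^ (l - 1))) →
        Summable (fun n : ℕ => lam n * x ^ n) :=
  stmt_9_general p l hiso E hE0 hE π hval lam hlam
end

section
/- There exist homogeneous polynomials S_k(X,Y) ∈ ℤ[X,Y] of degree p^k for each k ≥ 0, with S_0(X,Y) = X + Y, such that the identity of formal power series AH(X) + AH(Y) = Σ_{k≥0} AH(S_k(X,Y)) holds in ℚ_p[[X,Y]], where AH(X) = Σ_{i≥0} X^{p^i}/p^i. Equivalently, E(X)·E(Y) = ∏_{k≥0} E(S_k(X,Y)) for the Artin–Hasse exponential E. -/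
/-!
Evaluating the ghost-component identity of Witt vector addition at `(X, 0, 0, …)` and
`(Y, 0, 0, …)` gives `X^{p^n} + Y^{p^n} = ∑_{i ≤ n} p^i S_i^{p^{n-i}}`, which forces `S_n` to be
homogeneous of degree `p^n` by induction on `n`. Dividing by `p^n` and summing over `n`, the
double sum `∑_n ∑_{i ≤ n} S_i^{p^{n-i}} / p^{n-i}` regroups as `∑_i AH(S_i)`; at a fixed
multidegree `d` every sum is finite, since `S_i^{p^j}` is homogeneous of degree
`p^{i+j} > i + j`.
-/

open MvPolynomial Finset

/-- The coefficient (at the multidegree `d`) of the formal power series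
`AH(Q) = ∑_{i≥0} Q^{p^i}/p^i` in `ℚ_p[[X,Y]]`, where `Q ∈ ℚ_p[X,Y]` is a
polynomial with no constant term (e.g. homogeneous of positive degree), so that
only the finitely many indices `i` with `p^i ≤ |d|` contribute. -/
noncomputable def ahSubstCoeff (p : ℕ) [Fact p.Prime] (Q : MvPolynomial (Fin 2) ℚ_[p])
    (d : Fin 2 →₀ ℕ) : ℚ_[p] :=
  ∑ i ∈ Finset.range ((d.sum fun _ n => n) + 1),
    ((p : ℚ_[p]) ^ i)⁻¹ * MvPolynomial.coeff d (Q ^ p ^ i)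

theorem MvPolynomial.IsHomogeneous.coeff_pow_pow_eq_zero {σ R : Type*} [CommSemiring R]
    {φ : MvPolynomial σ R} {p k j : ℕ} (hp : 1 < p) (hφ : φ.IsHomogeneous (p ^ k))
    {d : σ →₀ ℕ} (hd : d.degree < k + j) : coeff d (φ ^ p ^ j) = 0 := by
  refine (hφ.pow _).coeff_eq_zero (ne_of_lt ?_)
  rw [← pow_add]
  exact hd.trans (Nat.lt_pow_self hp)

theorem MvPolynomial.IsHomogeneous.of_C_mul {σ R : Type*} [CommSemiring R] [NoZeroDivisors R]
    {c : R} (hc : c ≠ 0) {φ : MvPolynomial σ R} {n : ℕ} (h : (C c * φ).IsHomogeneous n) :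
    φ.IsHomogeneous n :=
  fun d hd => h (by rw [coeff_C_mul]; exact mul_ne_zero hc hd)

section

variable (p : ℕ) [hp : Fact p.Prime]

noncomputable def wittAddXY (k : ℕ) : MvPolynomial (Fin 2) ℤ :=
  aeval (fun bj : Fin 2 × ℕ => if bj.2 = 0 then X bj.1 else 0) (WittVector.wittAdd p k)

theorem sum_pow_mul_wittAddXY_pow (n : ℕ) :
    ∑ i ∈ range (n + 1), (p : MvPolynomial (Fin 2) ℤ) ^ i * wittAddXY p i ^ p ^ (n - i) =
      X 0 ^ p ^ n + X 1 ^ p ^ n := by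
  have h := congrArg
    (aeval fun bj : Fin 2 × ℕ => if bj.2 = 0 then (X bj.1 : MvPolynomial (Fin 2) ℤ) else 0)
    (wittStructureInt_prop p (X 0 + X 1) n)
  simp only [aeval_bind₁, aeval_wittPolynomial, map_add, aeval_X, aeval_rename,
    Function.comp_def] at h
  simp only [wittAddXY, WittVector.wittAdd, h]
  simp [hp.out.ne_zero]

theorem wittAddXY_zero : wittAddXY p 0 = X 0 + X 1 := by
  simpa using sum_pow_mul_wittAddXY_pow p 0

theorem isHomogeneous_wittAddXY (k : ℕ) : (wittAddXY p k).IsHomogeneous (p ^ k) := by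
  induction k using Nat.strong_induction_on with
  | _ n ih =>
    have hghost := sum_pow_mul_wittAddXY_pow p n
    rw [sum_range_succ, Nat.sub_self, pow_zero, pow_one, ← eq_sub_iff_add_eq'] at hghost
    refine .of_C_mul (pow_ne_zero n (Int.natCast_ne_zero.2 hp.out.ne_zero)) ?_
    rw [map_pow, map_natCast, hghost]
    refine ((isHomogeneous_X_pow _ _).add (isHomogeneous_X_pow _ _)).sub
      (IsHomogeneous.sum _ _ _ fun i hi => ?_)
    have hpow : p ^ i * p ^ (n - i) = p ^ n := by
      rw [← pow_add, Nat.add_sub_cancel' (mem_range.1 hi).le]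
    rw [← map_natCast C, ← map_pow, ← hpow]
    exact ((ih i (mem_range.1 hi)).pow _).C_mul _

theorem sum_ahSubstCoeff_eq_of_ghost (T G : ℕ → MvPolynomial (Fin 2) ℚ_[p])
    (hT : ∀ k, (T k).IsHomogeneous (p ^ k))
    (hG : ∀ n, ∑ i ∈ range (n + 1), (p : MvPolynomial (Fin 2) ℚ_[p]) ^ i * T i ^ p ^ (n - i) = G n)
    (d : Fin 2 →₀ ℕ) :
    ∑ n ∈ range ((d.sum fun _ n => n) + 1), ((p : ℚ_[p]) ^ n)⁻¹ * coeff d (G n) =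
      ∑ k ∈ range ((d.sum fun _ n => n) + 1), ahSubstCoeff p (T k) d := by
  set N := d.sum fun _ n => n
  have hp0 : (p : ℚ_[p]) ≠ 0 := Nat.cast_ne_zero.2 hp.out.ne_zero
  let F k j := ((p : ℚ_[p]) ^ j)⁻¹ * coeff d (T k ^ p ^ j)
  calc ∑ n ∈ range (N + 1), ((p : ℚ_[p]) ^ n)⁻¹ * coeff d (G n)
      = ∑ n ∈ range (N + 1), ∑ k ∈ range (n + 1), F k (n - k) := by
        refine sum_congr rfl fun n _ => ?_
        rw [← hG, coeff_sum, mul_sum]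
        refine sum_congr rfl fun k hk => ?_
        have hpow : (p : ℚ_[p]) ^ n = p ^ k * p ^ (n - k) := by
          rw [← pow_add, Nat.add_sub_cancel' (Nat.lt_succ_iff.1 (mem_range.1 hk))]
        rw [← map_natCast C, ← map_pow, coeff_C_mul, hpow]
        simp only [F]
        field_simp
    _ = ∑ k ∈ range (N + 1), ∑ j ∈ range (N + 1 - k), F k j := sum_range_diag_flip _ _
    _ = ∑ k ∈ range (N + 1), ∑ j ∈ range (N + 1), F k j := by
        refine sum_congr rfl fun k _ => sum_subset (range_subset_range.2 (by omega)) ?_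
        intro j _ hj
        rw [mem_range] at hj
        simp only [F, (hT k).coeff_pow_pow_eq_zero hp.out.one_lt
          (show d.degree < k + j by change N < k + j; omega), mul_zero]

end

/-- There exist homogeneous polynomials `S_k(X,Y) ∈ ℤ[X,Y]` of degree `p^k`,
with `S_0 = X + Y`, such that `AH(X) + AH(Y) = ∑_{k≥0} AH(S_k(X,Y))` holds in
`ℚ_p[[X,Y]]` (coefficientwise; at multidegree `d` only the `k` with
`p^k ≤ |d|` contribute). -/
theorem stmt_13 (p : ℕ) [Fact p.Prime] :
    ∃ S : ℕ → MvPolynomial (Fin 2) ℤ,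
      S 0 = X 0 + X 1 ∧
      (∀ k : ℕ, (S k).IsHomogeneous (p ^ k)) ∧
      ∀ d : Fin 2 →₀ ℕ,
        ahSubstCoeff p (X 0) d + ahSubstCoeff p (X 1) d =
          ∑ k ∈ Finset.range ((d.sum fun _ n => n) + 1),
            ahSubstCoeff p ((S k).map (Int.castRingHom ℚ_[p])) d := by
  have hghost (n : ℕ) : ∑ i ∈ range (n + 1), (p : MvPolynomial (Fin 2) ℚ_[p]) ^ i *
      (wittAddXY p i).map (Int.castRingHom ℚ_[p]) ^ p ^ (n - i) = X 0 ^ p ^ n + X 1 ^ p ^ n := by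
    simpa using congrArg (map (Int.castRingHom ℚ_[p])) (sum_pow_mul_wittAddXY_pow p n)
  refine ⟨wittAddXY p, wittAddXY_zero p, isHomogeneous_wittAddXY p, fun d => ?_⟩
  rw [← sum_ahSubstCoeff_eq_of_ghost p _ _ (fun k => (isHomogeneous_wittAddXY p k).map _) hghost]
  simp only [ahSubstCoeff, coeff_add, mul_add, sum_add_distrib]
end

section
/- Let p be prime, m ≥ 1, and 0 ≤ a ≤ p^m - 2 with p-adic expansion a = a_0 + p·a_1 + ... + p^{m-1}·a_{m-1} (0 ≤ a_i ≤ p-1). If n_0,...,n_{m-1} are nonnegative integers with n_0 + p·n_1 + ... + p^{m-1}·n_{m-1} ≡ a (mod p^m - 1), then n_0 + n_1 + ... + n_{m-1} ≥ a_0 + a_1 + ... + a_{m-1}, with equality if and only if n_i = a_i for all i. -/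
open Finset

private lemma digit_decomp (p : ℕ) (f : ℕ → ℕ) (m : ℕ) (hm : 1 ≤ m) :
    ∑ j ∈ range m, f j * p ^ j
      = f 0 + p * ∑ j ∈ range (m - 1), f (j + 1) * p ^ j := by
  obtain ⟨m', rfl⟩ : ∃ m', m = m' + 1 := ⟨m - 1, by omega⟩
  rw [Finset.sum_range_succ', pow_zero, mul_one, add_comm, Finset.mul_sum]
  simp only [Nat.add_sub_cancel]
  congr 1
  refine Finset.sum_congr rfl fun j _ => ?_
  ring

private lemma digit_extract (p : ℕ) :
    ∀ (k : ℕ) (f : ℕ → ℕ) (m : ℕ), (∀ i, f i < p) → k < m →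
      (∑ j ∈ range m, f j * p ^ j) / p ^ k % p = f k := by
  intro k
  induction k with
  | zero =>
      intro f m hf hk
      rw [digit_decomp p f m (by omega), pow_zero, Nat.div_one,
        Nat.add_mul_mod_self_left, Nat.mod_eq_of_lt (hf 0)]
  | succ k ih =>
      intro f m hf hk
      have hp0 : 0 < p := lt_of_le_of_lt (Nat.zero_le _) (hf 0)
      rw [digit_decomp p f m (by omega), pow_succ', ← Nat.div_div_eq_div_mul,
        Nat.add_mul_div_left _ _ hp0, Nat.div_eq_of_lt (hf 0), Nat.zero_add]
      exact ih _ (m - 1) (fun i => hf (i + 1)) (by omega)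

private lemma sum_lt_pow (p : ℕ) (f : ℕ → ℕ) (hf : ∀ i, f i < p) :
    ∀ m, (∑ j ∈ range m, f j * p ^ j) < p ^ m := by
  intro m
  have hp0 : 0 < p := lt_of_le_of_lt (Nat.zero_le _) (hf 0)
  induction m with
  | zero => simp
  | succ m ih =>
      rw [Finset.sum_range_succ, pow_succ]
      have h1 : f m * p ^ m ≤ (p - 1) * p ^ m :=
        Nat.mul_le_mul_right _ (by have := hf m; omega)
      have key : p ^ m * p = (p - 1) * p ^ m + p ^ m := by
        calc p ^ m * p = p * p ^ m := mul_comm _ _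
          _ = ((p - 1) + 1) * p ^ m := by rw [Nat.sub_add_cancel hp0]
          _ = (p - 1) * p ^ m + 1 * p ^ m := add_mul _ _ _
          _ = (p - 1) * p ^ m + p ^ m := by rw [one_mul]
      omega

private lemma case_small (p m : ℕ) (hp : 2 ≤ p) (hm : 1 ≤ m) (a : ℕ) (ha : a + 2 ≤ p ^ m)
    (n : Fin m → ℕ) (hn : ∀ i, n i < p)
    (hcong : (∑ i : Fin m, n i * p ^ (i : ℕ)) ≡ a [MOD p ^ m - 1]) :
    (∑ i : Fin m, a / p ^ (i : ℕ) % p) ≤ ∑ i : Fin m, n i ∧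
      ((∑ i : Fin m, n i) = ∑ i : Fin m, a / p ^ (i : ℕ) % p →
        ∀ i : Fin m, n i = a / p ^ (i : ℕ) % p) := by
  set f : ℕ → ℕ := fun j => if h : j < m then n ⟨j, h⟩ else 0 with hfdef
  have hf : ∀ i, f i < p := by
    intro i
    by_cases h : i < m
    · simpa [hfdef, h] using hn ⟨i, h⟩
    · simp only [hfdef, h, dif_neg, not_false_iff]; omega
  have hNeq : (∑ i : Fin m, n i * p ^ (i : ℕ)) = ∑ j ∈ range m, f j * p ^ j := by
    rw [← Fin.sum_univ_eq_sum_range (fun j => f j * p ^ j) m]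
    exact Finset.sum_congr rfl fun i _ => by simp [hfdef, i.isLt]
  set N := ∑ j ∈ range m, f j * p ^ j with hN
  have h2 : 2 ≤ p ^ m := by omega
  have hNlt : N < p ^ m := sum_lt_pow p f hf m
  have hmod : N % (p ^ m - 1) = a := by
    have h1 : N % (p ^ m - 1) = a % (p ^ m - 1) := by rw [← hNeq]; exact hcong
    rw [h1, Nat.mod_eq_of_lt (by omega : a < p ^ m - 1)]
  rcases lt_or_eq_of_le (show N ≤ p ^ m - 1 by omega) with hlt | heq
  · have hNa : N = a := by rw [← hmod, Nat.mod_eq_of_lt hlt]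
    have hdig : ∀ i : Fin m, a / p ^ (i : ℕ) % p = n i := by
      intro i
      rw [← hNa, hN, digit_extract p i f m hf i.isLt]
      simp [hfdef, i.isLt]
    refine ⟨le_of_eq (Finset.sum_congr rfl fun i _ => hdig i), fun _ i => (hdig i).symm⟩
  · have ha0 : a = 0 := by rw [← hmod, ← heq, Nat.mod_self]
    have hdig0 : ∀ i : Fin m, a / p ^ (i : ℕ) % p = 0 := by intro i; simp [ha0]
    constructor
    · calc (∑ i : Fin m, a / p ^ (i : ℕ) % p) = 0 := Finset.sum_eq_zero fun i _ => hdig0 i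
        _ ≤ _ := Nat.zero_le _
    · intro hsum i
      have hz : ∑ i : Fin m, n i = 0 := by
        rw [hsum]; exact Finset.sum_eq_zero fun i _ => hdig0 i
      have hni : n i = 0 := Finset.sum_eq_zero_iff.mp hz i (Finset.mem_univ i)
      rw [hni, hdig0 i]

private lemma aux_main (p m : ℕ) (hp : 2 ≤ p) (hm : 1 ≤ m) (a : ℕ) (ha : a + 2 ≤ p ^ m) :
    ∀ (s : ℕ) (n : Fin m → ℕ), (∑ i : Fin m, n i) ≤ s →
      (∑ i : Fin m, n i * p ^ (i : ℕ)) ≡ a [MOD p ^ m - 1] →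
      (∑ i : Fin m, a / p ^ (i : ℕ) % p) ≤ ∑ i : Fin m, n i ∧
        ((∑ i : Fin m, n i) = ∑ i : Fin m, a / p ^ (i : ℕ) % p →
          ∀ i : Fin m, n i = a / p ^ (i : ℕ) % p) := by
  intro s
  induction s with
  | zero =>
      intro n hs hcong
      apply case_small p m hp hm a ha n _ hcong
      intro i
      have := Finset.single_le_sum (f := n) (fun _ _ => Nat.zero_le _) (Finset.mem_univ i)
      omega
  | succ s ih =>
      intro n hs hcong
      by_cases hsmall : ∀ i, n i < p
      · exact case_small p m hp hm a ha n hsmall hcong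
      push_neg at hsmall
      obtain ⟨j, hj⟩ := hsmall
      set j' : Fin m := ⟨((j : ℕ) + 1) % m, Nat.mod_lt _ (by omega)⟩ with hj'def
      set b : Fin m → ℕ := fun i => if i = j then n j - p else n i with hbdef
      set n' : Fin m → ℕ := fun i => b i + if i = j' then 1 else 0 with hn'def
      have hnb : ∀ i, n i = b i + if i = j then p else 0 := by
        intro i
        by_cases h : i = j
        · subst h; simp only [hbdef, if_pos rfl, if_true]; omega
        · simp [hbdef, h]
      have hsum_n : ∑ i : Fin m, n i = (∑ i : Fin m, b i) + p := by
        rw [Finset.sum_congr rfl fun i _ => hnb i, Finset.sum_add_distrib]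
        simp
      have hsum_n' : ∑ i : Fin m, n' i = (∑ i : Fin m, b i) + 1 := by
        rw [hn'def, Finset.sum_add_distrib]
        simp
      have hw_n : ∑ i : Fin m, n i * p ^ (i : ℕ)
          = (∑ i : Fin m, b i * p ^ (i : ℕ)) + p ^ ((j : ℕ) + 1) := by
        have hterm : ∀ i : Fin m, n i * p ^ (i : ℕ)
            = b i * p ^ (i : ℕ) + (if i = j then p ^ ((j : ℕ) + 1) else 0) := by
          intro i
          rw [hnb i, add_mul]
          congr 1
          by_cases h : i = j
          · subst h; simp [pow_succ, Nat.mul_comm]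
          · simp [h]
        rw [Finset.sum_congr rfl fun i _ => hterm i, Finset.sum_add_distrib]
        simp
      have hw_n' : ∑ i : Fin m, n' i * p ^ (i : ℕ)
          = (∑ i : Fin m, b i * p ^ (i : ℕ)) + p ^ ((j' : ℕ)) := by
        have hterm : ∀ i : Fin m, n' i * p ^ (i : ℕ)
            = b i * p ^ (i : ℕ) + (if i = j' then p ^ ((j' : ℕ)) else 0) := by
          intro i
          rw [hn'def, add_mul]
          congr 1
          by_cases h : i = j'
          · subst h; simp
          · simp [h]
        rw [Finset.sum_congr rfl fun i _ => hterm i, Finset.sum_add_distrib]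
        simp
      have h2 : 2 ≤ p ^ m := by omega
      have hpow : p ^ ((j' : ℕ)) ≡ p ^ ((j : ℕ) + 1) [MOD p ^ m - 1] := by
        rcases Nat.lt_or_ge ((j : ℕ) + 1) m with h | h
        · have hh : ((j' : ℕ)) = (j : ℕ) + 1 := by
            simp [hj'def, Nat.mod_eq_of_lt h]
          rw [hh]
        · have hjm : (j : ℕ) + 1 = m := by have := j.isLt; omega
          have hh : ((j' : ℕ)) = 0 := by simp [hj'def, hjm]
          rw [hh, hjm, pow_zero]
          exact (Nat.modEq_iff_dvd' (by omega)).mpr (dvd_refl _)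
      have hcong' : (∑ i : Fin m, n' i * p ^ (i : ℕ)) ≡ a [MOD p ^ m - 1] := by
        have h1 : (∑ i : Fin m, n' i * p ^ (i : ℕ))
            ≡ ∑ i : Fin m, n i * p ^ (i : ℕ) [MOD p ^ m - 1] := by
          rw [hw_n, hw_n']
          exact Nat.ModEq.add_left _ hpow
        exact h1.trans hcong
      have hle' : ∑ i : Fin m, n' i ≤ s := by omega
      obtain ⟨h1, -⟩ := ih n' hle' hcong'
      exact ⟨by omega, fun heq => absurd heq (by omega)⟩

/-- Digit lemma: if `n₀ + p n₁ + ⋯ + p^{m-1} n_{m-1} ≡ a (mod p^m - 1)` with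
`0 ≤ a ≤ p^m - 2`, then `∑ nᵢ ≥ ∑ aᵢ` (sum of base-`p` digits of `a`), with
equality iff `nᵢ = aᵢ` for all `i`. -/
theorem stmt_15 (p m : ℕ) (hp : p.Prime) (hm : 1 ≤ m) (a : ℕ) (ha : a + 2 ≤ p ^ m)
    (n : Fin m → ℕ)
    (hcong : (∑ i : Fin m, n i * p ^ (i : ℕ)) ≡ a [MOD p ^ m - 1]) :
    (∑ i : Fin m, a / p ^ (i : ℕ) % p) ≤ ∑ i : Fin m, n i ∧
      ((∑ i : Fin m, n i) = ∑ i : Fin m, a / p ^ (i : ℕ) % p ↔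
        ∀ i : Fin m, n i = a / p ^ (i : ℕ) % p) := by
  obtain ⟨h1, h2⟩ := aux_main p m hp.two_le hm a ha (∑ i : Fin m, n i) n le_rfl hcong
  exact ⟨h1, ⟨h2, fun h => Finset.sum_congr rfl fun i _ => h i⟩⟩
end

section
/- Under the hypotheses of the digit lemma: if n_0 + p·n_1 + ... + p^{m-1}·n_{m-1} ≡ a (mod p^m - 1) with n_i ≥ 0 and 0 ≤ a ≤ p^m - 2 with base-p digits a_i, then (n_0 + ... + n_{m-1}) - (a_0 + ... + a_{m-1}) is a nonnegative multiple of p - 1. -/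
open Finset

private lemma sum_modEq_aux (d : ℕ) (s : Finset ℕ) (f g : ℕ → ℕ)
    (h : ∀ i ∈ s, f i ≡ g i [MOD d]) :
    (∑ i ∈ s, f i) ≡ (∑ i ∈ s, g i) [MOD d] := by
  induction s using Finset.cons_induction with
  | empty => rfl
  | cons a s ha ih =>
    simp only [Finset.sum_cons]
    exact Nat.ModEq.add (h a (Finset.mem_cons_self a s))
      (ih fun i hi => h i (Finset.mem_cons_of_mem hi))

private lemma digit_uniq (p : ℕ) (hp : 2 ≤ p) :
    ∀ m (n : ℕ → ℕ) (N : ℕ), (∀ i < m, n i < p) →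
      (∑ i ∈ range m, n i * p ^ i) = N →
      N < p ^ m ∧ ∀ i < m, n i = N / p ^ i % p := by
  intro m
  induction m with
  | zero =>
    intro n N _ hN
    simp only [range_zero, sum_empty] at hN
    exact ⟨by simp [← hN], fun i hi => absurd hi (Nat.not_lt_zero i)⟩
  | succ m ih =>
    intro n N hlt hN
    rw [Finset.sum_range_succ'] at hN
    simp only [pow_zero, mul_one] at hN
    have hre : (∑ i ∈ range m, n (i + 1) * p ^ (i + 1))
        = (∑ i ∈ range m, n (i + 1) * p ^ i) * p := by
      rw [Finset.sum_mul]
      exact Finset.sum_congr rfl fun i _ => by ring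
    set M := ∑ i ∈ range m, n (i + 1) * p ^ i with hM
    have hNeq : N = M * p + n 0 := by rw [← hN, hre]
    have hn0 : n 0 < p := hlt 0 (Nat.succ_pos m)
    have hdiv : N / p = M := by
      rw [hNeq, Nat.add_comm, Nat.add_mul_div_right _ _ (by omega : 0 < p),
        Nat.div_eq_of_lt hn0, Nat.zero_add]
    have hmod : N % p = n 0 := by
      rw [hNeq, Nat.add_comm, Nat.add_mul_mod_self_right, Nat.mod_eq_of_lt hn0]
    obtain ⟨hMlt, hdig⟩ := ih (fun i => n (i + 1)) M
      (fun i hi => hlt (i + 1) (by omega)) rfl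
    constructor
    · have : M * p + n 0 < (M + 1) * p := by
        rw [add_mul, one_mul]; omega
      calc N = M * p + n 0 := hNeq
        _ < (M + 1) * p := this
        _ ≤ p ^ m * p := Nat.mul_le_mul_right _ (by omega)
        _ = p ^ (m + 1) := (pow_succ p m).symm
    · intro i hi
      match i with
      | 0 => simpa using hmod.symm
      | j + 1 =>
        have := hdig j (by omega)
        rw [← hdiv, Nat.div_div_eq_div_mul, ← pow_succ'] at this
        exact this

private lemma key (p m a : ℕ) (hp : 2 ≤ p) (hm : 1 ≤ m) (ha : a + 2 ≤ p ^ m) :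
    ∀ S (n : ℕ → ℕ), (∑ i ∈ range m, n i) = S →
      (∑ i ∈ range m, n i * p ^ i) ≡ a [MOD p ^ m - 1] →
      ∃ c, S = (∑ i ∈ range m, a / p ^ i % p) + c * (p - 1) := by
  intro S
  induction S using Nat.strong_induction_on with
  | _ S IH =>
    intro n hS hcong
    by_cases hbig : ∀ i < m, n i < p
    · -- all digits < p : the representation is the digit expansion of N
      obtain ⟨hNlt, hdig⟩ := digit_uniq p hp m n _ hbig rfl
      set N := ∑ i ∈ range m, n i * p ^ i with hN
      have hd1 : 1 ≤ p ^ m - 1 := by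
        have : 2 ≤ p ^ m := by omega
        omega
      have had : a < p ^ m - 1 := by omega
      rcases lt_or_eq_of_le (show N ≤ p ^ m - 1 by omega) with hlt | heq
      · -- N < p^m - 1 : N = a
        have hNa : N = a := by
          have := hcong
          unfold Nat.ModEq at this
          rwa [Nat.mod_eq_of_lt hlt, Nat.mod_eq_of_lt had] at this
        refine ⟨0, ?_⟩
        rw [zero_mul, add_zero, ← hS]
        exact Finset.sum_congr rfl fun i hi => by
          rw [hdig i (Finset.mem_range.mp hi), hNa]
      · -- N = p^m - 1 : then a = 0
        have ha0 : a = 0 := by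
          have := hcong.symm
          unfold Nat.ModEq at this
          rw [Nat.mod_eq_of_lt had, ← heq, Nat.mod_self] at this
          exact this
        have hpow : ∀ i : ℕ, p ^ i ≡ 1 [MOD p - 1] := by
          intro i
          have : (p - 1) ∣ p ^ i - 1 ^ i := Nat.sub_dvd_pow_sub_pow p 1 i
          rw [one_pow] at this
          exact ((Nat.modEq_iff_dvd' (Nat.one_le_pow _ _ (by omega))).mpr this).symm
        have hSN : S ≡ N [MOD p - 1] := by
          rw [← hS]
          calc (∑ i ∈ range m, n i) ≡ (∑ i ∈ range m, n i * p ^ i) [MOD p - 1] := by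
                refine sum_modEq_aux _ _ _ _ fun i _ => ?_
                have := (hpow i).symm.mul_left (n i)
                simpa using this
            _ = N := rfl
        have hNdvd : (p - 1) ∣ N := by
          rw [heq]
          have := Nat.sub_dvd_pow_sub_pow p 1 m
          rwa [one_pow] at this
        have hSdvd : (p - 1) ∣ S := by
          have h0 : N ≡ 0 [MOD p - 1] := (Nat.modEq_zero_iff_dvd).mpr hNdvd
          exact (Nat.modEq_zero_iff_dvd).mp (hSN.trans h0)
        refine ⟨S / (p - 1), ?_⟩
        have hsz : (∑ i ∈ range m, a / p ^ i % p) = 0 := by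
          simp [ha0]
        rw [hsz, zero_add, Nat.div_mul_cancel hSdvd]
    · -- some digit ≥ p : perform a carry, decreasing the sum by p - 1
      push_neg at hbig
      obtain ⟨i, hi, hpi⟩ := hbig
      obtain ⟨t, ht⟩ := Nat.exists_eq_add_of_le hpi
      set k := (i + 1) % m with hk
      have hkm : k < m := Nat.mod_lt _ (by omega)
      set n' : ℕ → ℕ := fun j => Function.update n i t j + (if j = k then 1 else 0)
        with hn'
      have him : i ∈ range m := Finset.mem_range.mpr hi
      have hsum_upd : (∑ j ∈ range m, Function.update n i t j) + p
          = ∑ j ∈ range m, n j := by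
        rw [Finset.sum_update_of_mem him, ← Finset.add_sum_erase _ n him,
          Finset.erase_eq]
        omega
      have hone : (∑ j ∈ range m, (if j = k then 1 else 0)) = 1 := by
        rw [Finset.sum_ite_eq' (range m) k (fun _ => 1)]
        simp [Finset.mem_range.mpr hkm]
      have hS' : (∑ j ∈ range m, n' j) + p = S + 1 := by
        simp only [hn', Finset.sum_add_distrib, hone]
        omega
      have hw_upd : (∑ j ∈ range m, Function.update n i t j * p ^ j) + p ^ (i + 1)
          = ∑ j ∈ range m, n j * p ^ j := by
        rw [← Finset.add_sum_erase _ (fun j => Function.update n i t j * p ^ j) him,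
          ← Finset.add_sum_erase _ (fun j => n j * p ^ j) him]
        have h2 : (∑ j ∈ (range m).erase i, Function.update n i t j * p ^ j)
            = ∑ j ∈ (range m).erase i, n j * p ^ j :=
          Finset.sum_congr rfl fun j hj => by
            rw [Function.update_of_ne (Finset.ne_of_mem_erase hj)]
        have h1 : Function.update n i t i = t := Function.update_self i t n
        have h3 : n i * p ^ i = t * p ^ i + p ^ (i + 1) := by
          rw [ht, pow_succ]; ring
        rw [h1, h2]
        omega
      have hw' : (∑ j ∈ range m, n' j * p ^ j) + p ^ (i + 1)
          = (∑ j ∈ range m, n j * p ^ j) + p ^ k := by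
        have : ∀ j, n' j * p ^ j
            = Function.update n i t j * p ^ j + (if j = k then p ^ j else 0) := by
          intro j
          simp only [hn', add_mul]
          congr 1
          split <;> simp
        rw [Finset.sum_congr rfl fun j _ => this j, Finset.sum_add_distrib,
          Finset.sum_ite_eq' (range m) k (fun j => p ^ j), if_pos (Finset.mem_range.mpr hkm)]
        omega
      have hpowk : p ^ (i + 1) ≡ p ^ k [MOD p ^ m - 1] := by
        rcases Nat.lt_or_ge (i + 1) m with h | h
        · rw [hk, Nat.mod_eq_of_lt h]
        · have him1 : i + 1 = m := by omega
          have hk0 : k = 0 := by rw [hk, him1, Nat.mod_self]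
          rw [him1, hk0, pow_zero]
          exact ((Nat.modEq_iff_dvd' (Nat.one_le_pow _ _ (by omega))).mpr dvd_rfl).symm
      have hcong' : (∑ j ∈ range m, n' j * p ^ j) ≡ a [MOD p ^ m - 1] := by
        have h1 : (∑ j ∈ range m, n' j * p ^ j) + p ^ (i + 1)
            ≡ a + p ^ (i + 1) [MOD p ^ m - 1] := by
          rw [hw']
          exact hcong.add hpowk.symm
        exact h1.add_right_cancel' _
      have hSi : n i ≤ S := by
        rw [← hS]
        exact Finset.single_le_sum (fun j _ => Nat.zero_le _) him
      have hlt : (∑ j ∈ range m, n' j) < S := by omega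
      obtain ⟨c', hc'⟩ := IH _ hlt n' rfl hcong'
      refine ⟨c' + 1, ?_⟩
      have : S = (∑ j ∈ range m, n' j) + (p - 1) := by omega
      rw [this, hc', add_mul, one_mul]
      omega

/-- If `n₀ + p n₁ + ⋯ + p^{m-1} n_{m-1} ≡ a (mod p^m - 1)` with `0 ≤ a ≤ p^m - 2`,
then `(∑ nᵢ) - (∑ aᵢ)` is a nonnegative multiple of `p - 1`, where the `aᵢ` are the
base-`p` digits of `a`. -/
theorem stmt_16 (p m : ℕ) (hp : p.Prime) (hm : 1 ≤ m) (a : ℕ) (ha : a + 2 ≤ p ^ m)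
    (n : Fin m → ℕ)
    (hcong : (∑ i : Fin m, n i * p ^ (i : ℕ)) ≡ a [MOD p ^ m - 1]) :
    ∃ c : ℕ, (∑ i : Fin m, n i) = (∑ i : Fin m, a / p ^ (i : ℕ) % p) + c * (p - 1) := by
  have hp2 : 2 ≤ p := hp.two_le
  set nn : ℕ → ℕ := fun i => if h : i < m then n ⟨i, h⟩ else 0 with hnn
  have heq : ∀ i : Fin m, nn (i : ℕ) = n i := fun i => dif_pos i.isLt
  have h1 : (∑ i : Fin m, n i) = ∑ i ∈ range m, nn i := by
    rw [← Fin.sum_univ_eq_sum_range]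
    exact Finset.sum_congr rfl fun i _ => (heq i).symm
  have h2 : (∑ i : Fin m, n i * p ^ (i : ℕ)) = ∑ i ∈ range m, nn i * p ^ i := by
    rw [← Fin.sum_univ_eq_sum_range fun i => nn i * p ^ i]
    exact Finset.sum_congr rfl fun i _ => by rw [heq i]
  have h3 : (∑ i : Fin m, a / p ^ (i : ℕ) % p) = ∑ i ∈ range m, a / p ^ i % p :=
    Fin.sum_univ_eq_sum_range (fun i => a / p ^ i % p) m
  rw [h2] at hcong
  obtain ⟨c, hc⟩ := key p m a hp2 hm ha _ nn rfl hcong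
  exact ⟨c, by rw [h1, h3, hc]⟩
end

section
/- Let G(a) = Σ_{x ∈ T_m^*} χ^{-a}(x)·ψ̃_{l,m}(x) be the p-adic Gauss sum of level l, where T_m^* is the group of (p^m-1)-th roots of unity in the unramified extension O_m of ℤ_p, χ the tautological character of order p^m - 1 on T_m^*, and ψ̃_{l,m} an additive character of O_m of order p^l given by ψ̃_{l,m} = ψ̃_l ∘ Tr with ψ̃_l(1) = ζ_{p^l} = E(π_l). Then G(a) = (p^m - 1)·Σ λ_{n_0,l}···λ_{n_{m-1},l}, the sum over all tuples (n_0,...,n_{m-1}) of nonnegative integers with n_0 + p·n_1 + ... + p^{m-1}·n_{m-1} ≡ a (mod p^m - 1), where λ_{n,l} are the coefficients of θ_l(X) = E(π_l X). -/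
/-!
Expanding each `θ_l(x^{p^i})` as its power series, `ψ̃_{l,m}(x)` becomes
`∑_n λ_{n₀,l}⋯λ_{n_{m-1},l} · x^{n₀ + p n₁ + ⋯ + p^{m-1} n_{m-1}}`; in an ultrametric field a
product of finitely many convergent series may be expanded termwise over all tuples `n`.
Summing over `x ∈ T_m^*` and exchanging the finite sum with the series, orthogonality of the
characters `x ↦ x^t` of the cyclic group `T_m^*` keeps exactly the tuples with
`∑ p^i n_i ≡ a (mod p^m - 1)`, each weighted by `|T_m^*| = p^m - 1`.
-/

open PowerSeries

open Finset Polynomial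

instance IsUltrametricDist.nonarchimedeanRing {R : Type*} [NormedRing R] [IsUltrametricDist R] :
    NonarchimedeanRing R where
  is_nonarchimedean := NonarchimedeanAddGroup.is_nonarchimedean

theorem HasSum.fin_prod_of_nonarchimedean {R : Type*} [CommRing R] [UniformSpace R]
    [IsUniformAddGroup R] [NonarchimedeanRing R] {m : ℕ} {β : Fin m → Type*}
    {f : ∀ i, β i → R} {s : Fin m → R} (hf : ∀ i, HasSum (f i) (s i)) :
    HasSum (fun n : ∀ i, β i => ∏ i, f i (n i)) (∏ i, s i) := by
  induction m with
  | zero =>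
    simp only [univ_eq_empty, prod_empty]
    exact hasSum_unique _
  | succ m ih =>
    have h := (hf 0).mul_of_nonarchimedean (ih fun i => hf i.succ)
    rw [Fin.prod_univ_succ, ← (Fin.consEquiv β).hasSum_iff]
    simpa [Fin.consEquiv, Function.comp_def, Fin.prod_univ_succ] using h

theorem IsPrimitiveRoot.sum_nthRootsFinset_one {R M : Type*} [CommRing R] [IsDomain R]
    [AddCommMonoid M] {ζ : R} {N : ℕ} (hζ : IsPrimitiveRoot ζ N) (f : R → M) :
    ∑ x ∈ nthRootsFinset N (1 : R), f x = ∑ j ∈ range N, f (ζ ^ j) := by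
  classical
  rw [sum_eq_multiset_sum, nthRootsFinset, Multiset.toFinset_val,
    (hζ.nthRoots_one_nodup).dedup, hζ.nthRoots_eq (one_pow N)]
  simp [sum_eq_multiset_sum]

theorem IsPrimitiveRoot.sum_nthRootsFinset_inv_pow_mul_pow {K : Type*} [Field K] {ζ : K}
    {N : ℕ} (hζ : IsPrimitiveRoot ζ N) (hN : 0 < N) (a M : ℕ) :
    ∑ x ∈ nthRootsFinset N (1 : K), x⁻¹ ^ a * x ^ M
      = if M % N = a % N then (N : K) else 0 := by
  have hζ0 : ζ ≠ 0 := hζ.ne_zero hN.ne'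
  set r := ζ⁻¹ ^ a * ζ ^ M with hr_def
  have hterm : ∀ j, (ζ ^ j)⁻¹ ^ a * (ζ ^ j) ^ M = r ^ j := fun j => by
    simp only [r, mul_pow, inv_pow, ← pow_mul, mul_comm j]
  have hr : r = 1 ↔ M % N = a % N := by
    rw [hr_def, inv_pow, inv_mul_eq_one₀ (pow_ne_zero _ hζ0), eq_comm,
      (hζ.isOfFinOrder hN.ne').pow_inj_mod, ← hζ.eq_orderOf]
  rw [hζ.sum_nthRootsFinset_one, sum_congr rfl fun j _ => hterm j]
  split_ifs with h
  · simp [hr.mpr h]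
  · have hrN : r ^ N = 1 := by
      rw [← hterm, ← pow_mul, mul_comm, pow_mul, hζ.pow_eq_one, one_pow, inv_one, one_pow, one_mul]
    rw [geom_sum_eq (mt hr.mp h), hrN, sub_self, zero_div]

theorem stmt_19_general (p : ℕ) [Fact p.Prime] (m : ℕ) (hm : 1 ≤ m)
    {K : Type*} [NormedField K] [Algebra ℚ_[p] K] [IsAlgClosed K]
    [IsUltrametricDist K]
    (lam : ℕ → K)
    (θ : K → ℕ → K)
    (hθ : ∀ x ∈ Polynomial.nthRootsFinset (p ^ m - 1) (1 : K), ∀ i : ℕ,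
      HasSum (fun n : ℕ => lam n * (x ^ p ^ i) ^ n) (θ x i))
    (a : ℕ) :
    ∑ x ∈ Polynomial.nthRootsFinset (p ^ m - 1) (1 : K),
        (x⁻¹) ^ a * ∏ i ∈ Finset.range m, θ x i
      = ((p ^ m - 1 : ℕ) : K) *
        ∑' n : Fin m → ℕ,
          if (∑ i : Fin m, n i * p ^ (i : ℕ)) % (p ^ m - 1) = a % (p ^ m - 1)
          then ∏ i : Fin m, lam (n i) else 0 := by
  set N := p ^ m - 1
  have hN : 0 < N := Nat.sub_pos_of_lt (Nat.one_lt_pow (by omega) (Fact.out : p.Prime).one_lt)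
  have : CharZero K := charZero_of_injective_algebraMap (algebraMap ℚ_[p] K).injective
  have : NeZero (N : K) := ⟨Nat.cast_ne_zero.mpr hN.ne'⟩
  obtain ⟨ζ, hζ⟩ := HasEnoughRootsOfUnity.exists_primitiveRoot K N
  have hexpand : ∀ x ∈ nthRootsFinset N (1 : K), HasSum
      (fun n : Fin m → ℕ => x⁻¹ ^ a * ((∏ i, lam (n i)) * x ^ ∑ i : Fin m, n i * p ^ (i : ℕ)))
      (x⁻¹ ^ a * ∏ i ∈ range m, θ x i) := fun x hx => by
    have h := HasSum.fin_prod_of_nonarchimedean fun i : Fin m => hθ x hx i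
    simp only [prod_mul_distrib, ← pow_mul, prod_pow_eq_pow_sum, mul_comm (p ^ _)] at h
    rw [prod_range fun i => θ x i]
    exact h.mul_left _
  calc _ = ∑' n : Fin m → ℕ, ∑ x ∈ nthRootsFinset N (1 : K),
          x⁻¹ ^ a * ((∏ i, lam (n i)) * x ^ ∑ i : Fin m, n i * p ^ (i : ℕ)) :=
        (hasSum_sum hexpand).tsum_eq.symm
    _ = _ := by
      rw [← tsum_mul_left]
      refine tsum_congr fun n => ?_
      simp only [mul_left_comm _ (∏ i, lam (n i)), ← mul_sum,
        hζ.sum_nthRootsFinset_inv_pow_mul_pow hN]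
      split_ifs <;> ring

/-- The `p`-adic Gauss sum of level `l`,
`G(a) = ∑_{x ∈ T_m^*} χ^{-a}(x)·ψ̃_{l,m}(x)`, where `T_m^*` is the group of
`(p^m-1)`-th roots of unity, `χ(x) = x` the tautological character, and
`ψ̃_{l,m}(x) = θ_l(x)·θ_l(x^p)⋯θ_l(x^{p^{m-1}})` with `θ_l(X) = E(π_l X)
= ∑ λ_{n,l} X^n`, satisfies
`G(a) = (p^m - 1)·∑ λ_{n₀,l}⋯λ_{n_{m-1},l}`, the sum over all tuples
`(n₀,…,n_{m-1})` of nonnegative integers with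
`n₀ + p·n₁ + ⋯ + p^{m-1}·n_{m-1} ≡ a (mod p^m - 1)`. -/
theorem stmt_19 (p : ℕ) [Fact p.Prime] (l m : ℕ) (hl : 1 ≤ l) (hm : 1 ≤ m)
    {K : Type*} [NormedField K] [Algebra ℚ_[p] K] [IsAlgClosed K] [CompleteSpace K]
    [IsUltrametricDist K]
    (hiso : ∀ x : ℚ_[p], ‖algebraMap ℚ_[p] K x‖ = ‖x‖)
    (E : PowerSeries ℚ_[p]) (hE0 : PowerSeries.constantCoeff E = 1)
    (hE : PowerSeries.derivative ℚ_[p] E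
        = PowerSeries.derivative ℚ_[p] (artinHasseLog p) * E)
    (π : K) (hroot : HasSum (fun i : ℕ => π ^ p ^ i / (p : K) ^ i) 0)
    (hval : ‖π‖ = (p : ℝ) ^ (-(1 / ((p : ℝ) ^ l - (p : ℝ) ^ (l - 1)))))
    (lam : ℕ → K)
    (hlam : ∀ n, lam n = algebraMap ℚ_[p] K (PowerSeries.coeff n E) * π ^ n)
    (θ : K → ℕ → K)
    (hθ : ∀ x ∈ Polynomial.nthRootsFinset (p ^ m - 1) (1 : K), ∀ i : ℕ,
      HasSum (fun n : ℕ => lam n * (x ^ p ^ i) ^ n) (θ x i))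
    (a : ℕ) (ha : a + 2 ≤ p ^ m) :
    ∑ x ∈ Polynomial.nthRootsFinset (p ^ m - 1) (1 : K),
        (x⁻¹) ^ a * ∏ i ∈ Finset.range m, θ x i
      = ((p ^ m - 1 : ℕ) : K) *
        ∑' n : Fin m → ℕ,
          if (∑ i : Fin m, n i * p ^ (i : ℕ)) % (p ^ m - 1) = a % (p ^ m - 1)
          then ∏ i : Fin m, lam (n i) else 0 :=
  stmt_19_general p m hm lam θ hθ a
end
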